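/- Let phi_1: (Z/5Z)^9 -> (Z/5Z)^2 send the i-th standard generator lambda_i to the pairs (1,1),(1,0),(1,1),(3,3),(3,0),(0,1),(0,1),(0,2),(1,1) for i = 1,...,9 respectively. Then the sum of the nine images is (0,0), and for every triple (i,j,k) in T, the two elements phi_1(lambda_i) and phi_1(lambda_i)+phi_1(lambda_j)+phi_1(lambda_k) generate (Z/5Z)^2 (and similarly with lambda_j and lambda_k in place of lambda_i). -/

import Mathlib

def T : Finset (ℕ × ℕ × ℕ) :=
  {(1,2,3), (4,5,6), (7,8,9), (1,4,7), (2,5,8), (3,6,9),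
   (1,5,9), (3,5,7), (1,6,8), (3,4,8), (2,4,9), (2,6,7)}

def phi1 : ℕ → ZMod 5 × ZMod 5
  | 1 => (1,1) | 2 => (1,0) | 3 => (1,1)
  | 4 => (3,3) | 5 => (3,0) | 6 => (0,1)
  | 7 => (0,1) | 8 => (0,2) | 9 => (1,1)
  | _ => (0,0)

def det₂ {R : Type*} [CommRing R] (v w : R × R) : R := v.1 * w.2 - v.2 * w.1

theorem span_pair_eq_top_of_det₂_ne_zero {K : Type*} [Field K] {v w : K × K} (h : det₂ v w ≠ 0) :
    Submodule.span K {v, w} = ⊤ := by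
  refine eq_top_iff.2 fun x _ => ?_
  have cramer : x = (det₂ x w / det₂ v w) • v + (det₂ v x / det₂ v w) • w := by
    have hd := mul_inv_cancel₀ h
    unfold det₂ at hd ⊢
    ext <;> simp only [Prod.fst_add, Prod.snd_add, Prod.smul_fst, Prod.smul_snd, smul_eq_mul]
    · linear_combination (-x.1) * hd
    · linear_combination (-x.2) * hd
  rw [cramer]
  exact Submodule.add_mem _
    (Submodule.smul_mem _ _ (Submodule.subset_span (by simp)))
    (Submodule.smul_mem _ _ (Submodule.subset_span (by simp)))

theorem det₂_phi1_exceptional_ne_zero : ∀ t ∈ T,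
    det₂ (phi1 t.1) (phi1 t.1 + phi1 t.2.1 + phi1 t.2.2) ≠ 0 ∧
    det₂ (phi1 t.2.1) (phi1 t.1 + phi1 t.2.1 + phi1 t.2.2) ≠ 0 ∧
    det₂ (phi1 t.2.2) (phi1 t.1 + phi1 t.2.1 + phi1 t.2.2) ≠ 0 := by
  decide

theorem stmt_5 :
    (∑ i ∈ Finset.Icc 1 9, phi1 i = 0) ∧
    ∀ i j k : ℕ, (i, j, k) ∈ T →
      (Submodule.span (ZMod 5) {phi1 i, phi1 i + phi1 j + phi1 k} = ⊤ ∧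
       Submodule.span (ZMod 5) {phi1 j, phi1 i + phi1 j + phi1 k} = ⊤ ∧
       Submodule.span (ZMod 5) {phi1 k, phi1 i + phi1 j + phi1 k} = ⊤) := by
  have : Fact (Nat.Prime 5) := ⟨Nat.prime_five⟩
  refine ⟨by decide, fun i j k hijk => ?_⟩
  obtain ⟨hi, hj, hk⟩ := det₂_phi1_exceptional_ne_zero _ hijk
  exact ⟨span_pair_eq_top_of_det₂_ne_zero hi, span_pair_eq_top_of_det₂_ne_zero hj,
    span_pair_eq_top_of_det₂_ne_zero hk⟩
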